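/- In the path graph G(P) of a set P of n ≥ 5 points in convex position, every vertex representing a boundary path has degree exactly 3n-7. -/

import Mathlib

namespace PG

/-- The `k`-th vertex (mod `n`) of the convex polygon. -/
def pt (n : ℕ) (hn : 0 < n) (k : ℕ) : Fin n := ⟨k % n, Nat.mod_lt _ hn⟩

/-- `e` is a boundary (convex hull) edge of the convex `n`-gon. -/
def IsHullEdge {n : ℕ} (e : Sym2 (Fin n)) : Prop :=
  ∃ a b : Fin n, e = s(a, b) ∧ ((a.val + 1) % n = b.val ∨ (b.val + 1) % n = a.val)

instance {n : ℕ} : DecidablePred (IsHullEdge (n := n)) := fun _ => by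
  unfold IsHullEdge; infer_instance

/-- Two chords of the convex `n`-gon cross (intersect in interior points):
their endpoint pairs are all distinct and separate each other in the cyclic order. -/
def Crosses {n : ℕ} (e f : Sym2 (Fin n)) : Prop :=
  ∃ a b c d : Fin n, e = s(a, b) ∧ f = s(c, d) ∧
    a ≠ b ∧ c ≠ d ∧ a ≠ c ∧ a ≠ d ∧ b ≠ c ∧ b ≠ d ∧
    (((c.val + n - a.val) % n < (b.val + n - a.val) % n) ↔
      ¬((d.val + n - a.val) % n < (b.val + n - a.val) % n))

instance {n : ℕ} (e f : Sym2 (Fin n)) : Decidable (Crosses e f) := by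
  unfold Crosses; infer_instance

/-- The edge set of the spanning path visiting the points in the order given
by the permutation `p`. -/
def pathEdges {n : ℕ} (p : Equiv.Perm (Fin n)) : Finset (Sym2 (Fin n)) :=
  Finset.univ.filter (fun e => ∃ i j : Fin n, e = s(p i, p j) ∧ j.val = i.val + 1)

/-- `E` is the edge set of a non-crossing (plane) spanning path. -/
def IsNCPath {n : ℕ} (E : Finset (Sym2 (Fin n))) : Prop :=
  (∃ p : Equiv.Perm (Fin n), E = pathEdges p) ∧ ∀ e ∈ E, ∀ f ∈ E, ¬ Crosses e f

instance {n : ℕ} : DecidablePred (IsNCPath (n := n)) := fun _ => by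
  unfold IsNCPath pathEdges; infer_instance

/-- Vertices of the path graph `G(P)`: non-crossing spanning paths. -/
def PVert (n : ℕ) := {E : Finset (Sym2 (Fin n)) // IsNCPath E}

instance {n : ℕ} : Fintype (PVert n) := Subtype.fintype _
instance {n : ℕ} : DecidableEq (PVert n) := Subtype.instDecidableEq

/-- The path graph `G(P)`: two plane spanning paths are adjacent iff their
edge sets differ in exactly two edges. -/
def pathGraph (n : ℕ) : SimpleGraph (PVert n) where
  Adj u v := u ≠ v ∧ (u.1 \ v.1 ∪ v.1 \ u.1).card = 2
  symm := ⟨by rintro u v ⟨h1, h2⟩; exact ⟨h1.symm, by rwa [Finset.union_comm]⟩⟩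
  loopless := ⟨by rintro u ⟨h, _⟩; exact h rfl⟩

instance {n : ℕ} : DecidableRel (pathGraph n).Adj := fun u v => by
  unfold pathGraph; infer_instance

/-- `v` is a boundary path: all its edges are hull edges. -/
def IsBoundary {n : ℕ} (v : PVert n) : Prop := ∀ e ∈ v.1, IsHullEdge e

/-- Number of diagonals (the level) of a path. -/
def diagCount {n : ℕ} (v : PVert n) : ℕ :=
  (v.1.filter (fun e => ¬ IsHullEdge e)).card

/-- Degree of a point in an edge set. -/
def degIn {n : ℕ} (E : Finset (Sym2 (Fin n))) (x : Fin n) : ℕ :=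
  (E.filter (fun e => x ∈ e)).card

/-!
Rotating the polygon is an automorphism of `G(P)`, and a boundary path misses exactly one hull
edge, so we may assume that it is the path `0, 1, …, n - 1`. A neighbour drops one of its edges
`{x, x + 1}` and adds a chord `f`. All other edges are hull edges, so no crossing can occur and
the only constraint is that the result is again a spanning path. Degree at most two forces the
endpoints of `f` into `{0, n - 1, x, x + 1}`, and connectedness forbids `f` from closing a cycle
on one side of the gap. What remains is `f = {0, n - 1}` for each of the `n - 1` choices of `x`,
and `f = {0, x + 1}` or `f = {x, n - 1}` for the `n - 3` choices `0 < x < n - 2`; all of them are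
realised by reversing one or both of the segments `[0, x]` and `[x + 1, n - 1]`. Hence the degree
is `(n - 1) + 2 (n - 3) = 3n - 7`.
-/

open Finset

section Arithmetic

lemma add_one_mod_eq_ite {a n : ℕ} (h : a < n) :
    (a + 1) % n = if a + 1 = n then 0 else a + 1 := by
  split_ifs with h'
  · rw [h', Nat.mod_self]
  · exact Nat.mod_eq_of_lt (by omega)

lemma add_sub_mod_eq_ite {a b n : ℕ} (ha : a < n) (hb : b < n) :
    (a + n - b) % n = if b ≤ a then a - b else a + n - b := by
  split_ifs with h
  · rw [show a + n - b = a - b + n by omega, Nat.add_mod_right, Nat.mod_eq_of_lt (by omega)]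
  · exact Nat.mod_eq_of_lt (by omega)

variable {n : ℕ}

lemma val_add_sub_mod (a x : Fin n) : (x.val + n - a.val) % n = (x - a).val := by
  rw [Fin.val_sub, show n - a.val + x.val = x.val + n - a.val by omega]

variable [NeZero n]

lemma val_add_one (a : Fin n) : (a + 1).val = if a.val + 1 = n then 0 else a.val + 1 := by
  rw [Fin.val_add, Fin.val_one', Nat.add_mod_mod, add_one_mod_eq_ite a.isLt]

lemma eq_add_one_of_val_eq {a b : Fin n} (h : b.val = a.val + 1) : b = a + 1 :=
  Fin.ext (by rw [Fin.val_add_one_of_lt' (h ▸ b.isLt)]; exact h)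

lemma val_neg_one : (-1 : Fin n).val = n - 1 := by
  obtain ⟨m, rfl⟩ := Nat.exists_eq_succ_of_ne_zero (NeZero.ne n)
  simp

end Arithmetic

section HullEdges

variable {n : ℕ}

lemma isHullEdge_mk_iff {a b : Fin n} :
    IsHullEdge s(a, b) ↔ (a.val + 1) % n = b.val ∨ (b.val + 1) % n = a.val := by
  constructor
  · rintro ⟨c, d, h, hcd⟩
    rcases Sym2.eq_iff.mp h with ⟨rfl, rfl⟩ | ⟨rfl, rfl⟩ <;> tauto
  · exact fun h => ⟨a, b, rfl, h⟩

/-- A hull edge has cyclically adjacent endpoints, so nothing can separate them. -/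
lemma not_crosses_of_isHullEdge {e f : Sym2 (Fin n)} (h : IsHullEdge e ∨ IsHullEdge f) :
    ¬ Crosses e f := by
  rintro ⟨a, b, c, d, rfl, rfl, hab, hcd, hac, had, hbc, hbd, hsep⟩
  have ha := a.isLt; have hb := b.isLt; have hc := c.isLt; have hd := d.isLt
  simp only [isHullEdge_mk_iff, add_one_mod_eq_ite, add_sub_mod_eq_ite, ha, hb, hc, hd] at h hsep
  simp only [ne_eq, Fin.ext_iff] at hab hcd hac had hbc hbd
  split_ifs at h hsep <;> omega

lemma not_crosses_self (e : Sym2 (Fin n)) : ¬ Crosses e e := by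
  rintro ⟨a, b, c, d, rfl, h, hab, -, hac, had, -, -, -⟩
  rcases Sym2.eq_iff.mp h with ⟨rfl, rfl⟩ | ⟨rfl, rfl⟩
  exacts [hac rfl, had rfl]

variable [NeZero n]

lemma isHullEdge_iff {e : Sym2 (Fin n)} : IsHullEdge e ↔ ∃ k : Fin n, e = s(k, k + 1) := by
  have hsucc : ∀ a b : Fin n, (a.val + 1) % n = b.val ↔ b = a + 1 := by
    intro a b
    simp [Fin.ext_iff, Fin.val_add, eq_comm]
  constructor
  · rintro ⟨a, b, rfl, h | h⟩ <;> rw [hsucc] at h <;> subst h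
    exacts [⟨a, rfl⟩, ⟨b, Sym2.eq_swap⟩]
  · rintro ⟨k, rfl⟩
    exact ⟨k, k + 1, rfl, Or.inl ((hsucc k _).mpr rfl)⟩

lemma hullEdge_injective (hn : 3 ≤ n) : Function.Injective fun a : Fin n => s(a, a + 1) := by
  intro a b h
  rcases Sym2.eq_iff.mp h with ⟨h, -⟩ | ⟨h₁, h₂⟩
  · exact h
  · simp only [Fin.ext_iff, val_add_one] at h₁ h₂
    split_ifs at h₁ h₂ <;> omega

end HullEdges

section Paths

variable {n : ℕ}

lemma mem_pathEdges {p : Equiv.Perm (Fin n)} {e : Sym2 (Fin n)} :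
    e ∈ pathEdges p ↔ ∃ i j : Fin n, e = s(p i, p j) ∧ j.val = i.val + 1 := by
  simp [pathEdges]

lemma card_pathEdges (p : Equiv.Perm (Fin n)) : #(pathEdges p) = n - 1 := by
  refine card_eq_of_bijective (fun m hm => s(p ⟨m, by omega⟩, p ⟨m + 1, by omega⟩))
    (fun e he => ?_) (fun m hm => mem_pathEdges.mpr ⟨_, _, rfl, rfl⟩) (fun i j hi hj hij => ?_)
  · obtain ⟨i, j, rfl, hij⟩ := mem_pathEdges.mp he
    obtain ⟨j, hj⟩ := j
    subst hij
    exact ⟨i, by omega, rfl⟩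
  · rcases Sym2.eq_iff.mp hij with ⟨h, -⟩ | ⟨h₁, h₂⟩
    · exact Fin.mk.inj_iff.mp (p.injective h)
    · have := Fin.mk.inj_iff.mp (p.injective h₁)
      have := Fin.mk.inj_iff.mp (p.injective h₂)
      omega

lemma PVert.card_val (v : PVert n) : #v.1 = n - 1 := by
  obtain ⟨⟨p, hp⟩, -⟩ := v.2
  rw [hp, card_pathEdges]

lemma ne_of_mem_pathEdges {p : Equiv.Perm (Fin n)} {a b : Fin n} (h : s(a, b) ∈ pathEdges p) :
    a ≠ b := by
  obtain ⟨i, j, he, hij⟩ := mem_pathEdges.mp h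
  rcases Sym2.eq_iff.mp he with ⟨rfl, rfl⟩ | ⟨rfl, rfl⟩ <;>
    exact fun h => by have := congrArg Fin.val (p.injective h); omega

lemma degIn_pathEdges_le_two [NeZero n] (p : Equiv.Perm (Fin n)) (x : Fin n) :
    degIn (pathEdges p) x ≤ 2 := by
  obtain ⟨k, rfl⟩ := p.surjective x
  have hsub : (pathEdges p).filter (p k ∈ ·) ⊆ {s(p (k - 1), p k), s(p k, p (k + 1))} := by
    intro e he
    obtain ⟨he, hk⟩ := mem_filter.mp he
    obtain ⟨i, j, rfl, hij⟩ := mem_pathEdges.mp he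
    rw [Sym2.mem_iff, p.injective.eq_iff, p.injective.eq_iff] at hk
    rcases hk with rfl | rfl
    · simp [eq_add_one_of_val_eq hij]
    · have hk0 : k ≠ 0 := by rintro rfl; simp at hij
      have : i = k - 1 := Fin.ext (by rw [Fin.val_sub_one_of_ne_zero hk0]; omega)
      simp [this]
  exact (card_le_card hsub).trans card_le_two

lemma iff_of_forall_mem_pathEdges (p : Equiv.Perm (Fin n)) (g : Fin n → Prop)
    (hg : ∀ a b, s(a, b) ∈ pathEdges p → (g a ↔ g b)) (a b : Fin n) : g a ↔ g b := by
  have key : ∀ k (hk : k < n) (hk' : 0 < n), g (p ⟨k, hk⟩) ↔ g (p ⟨0, hk'⟩) := by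
    intro k
    induction k with
    | zero => exact fun _ _ => Iff.rfl
    | succ k ih =>
      intro hk hk'
      have hedge : s(p ⟨k, by omega⟩, p ⟨k + 1, hk⟩) ∈ pathEdges p :=
        mem_pathEdges.mpr ⟨_, _, rfl, rfl⟩
      exact (hg _ _ hedge).symm.trans (ih (by omega) hk')
  obtain ⟨i, rfl⟩ := p.surjective a
  obtain ⟨j, rfl⟩ := p.surjective b
  exact (key i i.isLt i.pos).trans (key j j.isLt i.pos).symm

end Paths

section Rotation

variable {n : ℕ} [NeZero n]

def rotateEdge (r : Fin n) : Sym2 (Fin n) ↪ Sym2 (Fin n) :=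
  (Equiv.addRight r).toEmbedding.sym2Map

@[simp] lemma rotateEdge_mk (r a b : Fin n) : rotateEdge r s(a, b) = s(a + r, b + r) := rfl

@[simp] lemma rotateEdge_neg_rotateEdge (r : Fin n) (e : Sym2 (Fin n)) :
    rotateEdge (-r) (rotateEdge r e) = e := by
  induction e using Sym2.ind
  simp

lemma map_rotateEdge_neg (r : Fin n) (E : Finset (Sym2 (Fin n))) :
    (E.map (rotateEdge r)).map (rotateEdge (-r)) = E := by
  ext e
  simp

lemma Crosses.rotate {e f : Sym2 (Fin n)} (h : Crosses e f) (r : Fin n) :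
    Crosses (rotateEdge r e) (rotateEdge r f) := by
  obtain ⟨a, b, c, d, rfl, rfl, hab, hcd, hac, had, hbc, hbd, hsep⟩ := h
  refine ⟨a + r, b + r, c + r, d + r, rfl, rfl, ?_⟩
  simp only [ne_eq, add_left_inj, val_add_sub_mod, add_sub_add_right_eq_sub] at hsep ⊢
  exact ⟨hab, hcd, hac, had, hbc, hbd, hsep⟩

lemma pathEdges_trans_addRight (p : Equiv.Perm (Fin n)) (r : Fin n) :
    pathEdges (p.trans (Equiv.addRight r)) = (pathEdges p).map (rotateEdge r) := by
  ext e
  simp only [mem_map, mem_pathEdges, Equiv.trans_apply]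
  constructor
  · rintro ⟨i, j, rfl, hij⟩
    exact ⟨_, ⟨i, j, rfl, hij⟩, rfl⟩
  · rintro ⟨_, ⟨i, j, rfl, hij⟩, rfl⟩
    exact ⟨i, j, rfl, hij⟩

lemma IsNCPath.rotate {E : Finset (Sym2 (Fin n))} (h : IsNCPath E) (r : Fin n) :
    IsNCPath (E.map (rotateEdge r)) := by
  obtain ⟨⟨p, rfl⟩, hnc⟩ := h
  refine ⟨⟨p.trans (Equiv.addRight r), (pathEdges_trans_addRight p r).symm⟩, ?_⟩
  simp only [mem_map]
  rintro _ ⟨e, he, rfl⟩ _ ⟨f, hf, rfl⟩ hcr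
  exact hnc e he f hf (by simpa using hcr.rotate (-r))

def rotateVert (r : Fin n) : PVert n ≃ PVert n where
  toFun v := ⟨v.1.map (rotateEdge r), v.2.rotate r⟩
  invFun v := ⟨v.1.map (rotateEdge (-r)), v.2.rotate (-r)⟩
  left_inv v := Subtype.ext (map_rotateEdge_neg r v.1)
  right_inv v := Subtype.ext (by simpa using map_rotateEdge_neg (-r) v.1)

@[simp] lemma rotateVert_val (r : Fin n) (v : PVert n) :
    (rotateVert r v).1 = v.1.map (rotateEdge r) := rfl

def rotateIso (r : Fin n) : pathGraph n ≃g pathGraph n where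
  toEquiv := rotateVert r
  map_rel_iff' {u v} := by
    simp only [pathGraph, ne_eq, (rotateVert r).injective.eq_iff, rotateVert_val,
      ← Finset.map_sdiff, ← Finset.map_union, card_map]

@[simp] lemma rotateIso_val (r : Fin n) (v : PVert n) :
    (rotateIso r v).1 = v.1.map (rotateEdge r) := rfl

lemma IsHullEdge.rotate {e : Sym2 (Fin n)} (h : IsHullEdge e) (r : Fin n) :
    IsHullEdge (rotateEdge r e) := by
  obtain ⟨k, rfl⟩ := isHullEdge_iff.mp h
  exact isHullEdge_iff.mpr ⟨k + r, by simp [add_right_comm]⟩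

lemma IsBoundary.rotate {v : PVert n} (hv : IsBoundary v) (r : Fin n) :
    IsBoundary (rotateIso r v) := by
  intro e he
  obtain ⟨e', he', rfl⟩ := mem_map.mp he
  exact (hv e' he').rotate r

end Rotation

section SymmDiff

variable {α : Type*} [DecidableEq α] {s t : Finset α} {e e' f f' : α}

lemma sdiff_union_sdiff_insert_erase (he : e ∈ s) (hf : f ∉ s) :
    s \ insert f (s.erase e) ∪ insert f (s.erase e) \ s = {e, f} := by
  ext a
  simp only [mem_union, mem_sdiff, mem_insert, mem_erase, mem_singleton]
  constructor
  · rintro (⟨ha, h⟩ | ⟨h, ha⟩) <;> tauto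
  · rintro (rfl | rfl)
    · exact Or.inl ⟨he, by rintro (rfl | ⟨h, -⟩) <;> tauto⟩
    · exact Or.inr ⟨Or.inl rfl, hf⟩

lemma eq_and_eq_of_insert_erase_eq (he : e ∈ s) (hf : f ∉ s)
    (h : insert f (s.erase e) = insert f' (s.erase e')) : e = e' ∧ f = f' := by
  have hef : e ≠ f := fun h => hf (h ▸ he)
  have h₁ : e ∉ insert f' (s.erase e') := h ▸ by simp [hef]
  have h₂ : f ∈ insert f' (s.erase e') := h ▸ mem_insert_self f _
  constructor
  · by_contra hne
    exact h₁ (mem_insert_of_mem (mem_erase.mpr ⟨hne, he⟩))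
  · rcases mem_insert.mp h₂ with h | h
    exacts [h, absurd (mem_of_mem_erase h) hf]

lemma exists_eq_insert_erase (hcard : #s = #t) (h : #(s \ t ∪ t \ s) = 2) :
    ∃ e ∈ s, ∃ f ∉ s, t = insert f (s.erase e) := by
  rw [card_union_of_disjoint disjoint_sdiff_sdiff] at h
  have := card_sdiff_add_card_inter s t
  have := card_sdiff_add_card_inter t s
  rw [inter_comm t s] at this
  obtain ⟨e, he⟩ := card_eq_one.mp (show #(s \ t) = 1 by omega)
  obtain ⟨f, hf⟩ := card_eq_one.mp (show #(t \ s) = 1 by omega)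
  have he' := mem_sdiff.mp (he ▸ mem_singleton_self e)
  have hf' := mem_sdiff.mp (hf ▸ mem_singleton_self f)
  refine ⟨e, he'.1, f, hf'.2, ext fun a => ?_⟩
  have hea := Finset.ext_iff.mp he a
  have hfa := Finset.ext_iff.mp hf a
  simp only [mem_sdiff, mem_singleton] at hea hfa
  rw [mem_insert, mem_erase]
  by_cases ha : a = f
  · subst ha
    simp [hf'.1]
  · tauto

end SymmDiff

section StdPath

variable {n : ℕ} [NeZero n]

lemma exists_hullEdge_not_mem (hn : 3 ≤ n) (v : PVert n) :
    ∃ a : Fin n, s(a, a + 1) ∉ v.1 := by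
  by_contra! h
  have := card_le_card_of_injOn (s := univ) _ (fun a _ => h a) (hullEdge_injective hn).injOn
  rw [PVert.card_val, card_univ, Fintype.card_fin] at this
  omega

def stdPath (n : ℕ) : Finset (Sym2 (Fin n)) := pathEdges (Equiv.refl (Fin n))

omit [NeZero n] in
lemma mk_mem_stdPath {a b : Fin n} :
    s(a, b) ∈ stdPath n ↔ a.val + 1 = b.val ∨ b.val + 1 = a.val := by
  simp only [stdPath, mem_pathEdges, Equiv.refl_apply, Sym2.eq_iff]
  constructor
  · rintro ⟨i, j, (⟨rfl, rfl⟩ | ⟨rfl, rfl⟩), h⟩ <;> omega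
  · rintro (h | h)
    exacts [⟨a, b, Or.inl ⟨rfl, rfl⟩, h.symm⟩, ⟨b, a, Or.inr ⟨rfl, rfl⟩, h.symm⟩]

lemma mem_stdPath {e : Sym2 (Fin n)} :
    e ∈ stdPath n ↔ ∃ x : Fin n, x.val + 1 < n ∧ e = s(x, x + 1) := by
  induction e using Sym2.ind with | h a b => ?_
  rw [mk_mem_stdPath]
  constructor
  · rintro (h | h)
    · exact ⟨a, by omega, by rw [eq_add_one_of_val_eq h.symm]⟩
    · exact ⟨b, by omega, by rw [Sym2.eq_swap, eq_add_one_of_val_eq h.symm]⟩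
  · rintro ⟨x, hx, h⟩
    rcases Sym2.eq_iff.mp h with ⟨rfl, rfl⟩ | ⟨rfl, rfl⟩ <;>
      rw [Fin.val_add_one_of_lt' hx] <;> omega

lemma isHullEdge_of_mem_stdPath {e : Sym2 (Fin n)} (he : e ∈ stdPath n) : IsHullEdge e := by
  obtain ⟨x, -, rfl⟩ := mem_stdPath.mp he
  exact isHullEdge_iff.mpr ⟨x, rfl⟩

lemma mk_mem_stdPath_erase {a b x : Fin n} (hx : x.val + 1 < n) :
    s(a, b) ∈ (stdPath n).erase s(x, x + 1) ↔
      (a.val + 1 = b.val ∨ b.val + 1 = a.val) ∧ min a.val b.val ≠ x.val := by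
  simp only [mem_erase, mk_mem_stdPath, ne_eq, Sym2.eq_iff, Fin.ext_iff, val_add_one]
  split_ifs <;> omega

lemma eq_stdPath_of_isBoundary {v : PVert n} (hv : IsBoundary v) (h : s(-1, 0) ∉ v.1) :
    v.1 = stdPath n := by
  refine eq_of_subset_of_card_le (fun e he => ?_) (by rw [PVert.card_val, stdPath, card_pathEdges])
  obtain ⟨k, rfl⟩ := isHullEdge_iff.mp (hv e he)
  have hk : k.val ≠ n - 1 := fun hk => h <| by
    rwa [show k = -1 from Fin.ext (hk.trans val_neg_one.symm), neg_add_cancel] at he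
  exact mk_mem_stdPath.mpr (Or.inl (Fin.val_add_one_of_lt' (by omega)).symm)

end StdPath

section Reflection

variable {n : ℕ}

/-- For `j > x` the value `x - j` wraps around to `n + x - j`, so `b₂` reverses `(x, n)`. -/
def reflectSegments (x : Fin n) (b₁ b₂ : Bool) (j : Fin n) : Fin n :=
  if j ≤ x then (if b₁ then x - j else j) else (if b₂ then x - j else j)

lemma val_reflectSegments (x : Fin n) (b₁ b₂ : Bool) (j : Fin n) :
    (reflectSegments x b₁ b₂ j).val =
      if j.val ≤ x.val then (if b₁ then x.val - j.val else j.val)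
      else (if b₂ then n + x.val - j.val else j.val) := by
  by_cases h : j ≤ x
  · cases b₁ <;> simp [reflectSegments, h, Fin.le_def.mp h, Fin.coe_sub_iff_le.mpr h]
  · cases b₂ <;>
      simp [reflectSegments, h, Fin.le_def.not.mp h, Fin.coe_sub_iff_lt.mpr (not_le.mp h)]

lemma reflectSegments_involutive (x : Fin n) (b₁ b₂ : Bool) :
    Function.Involutive (reflectSegments x b₁ b₂) := fun j => by
  have := j.isLt
  ext
  simp only [val_reflectSegments]
  cases b₁ <;> cases b₂ <;> simp only [Bool.false_eq_true, ↓reduceIte] <;> split_ifs <;> omega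

def reflectPerm (x : Fin n) (b₁ b₂ : Bool) : Equiv.Perm (Fin n) :=
  (reflectSegments_involutive x b₁ b₂).toPerm

end Reflection

section Neighbors

variable {n : ℕ} [NeZero n]

def exchange (x : Fin n) (f : Sym2 (Fin n)) : Finset (Sym2 (Fin n)) :=
  insert f ((stdPath n).erase s(x, x + 1))

lemma not_crosses_of_mem_exchange {x : Fin n} {f e e' : Sym2 (Fin n)} (he : e ∈ exchange x f)
    (he' : e' ∈ exchange x f) : ¬ Crosses e e' := by
  rcases mem_insert.mp he with rfl | he
  · rcases mem_insert.mp he' with rfl | he'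
    · exact not_crosses_self _
    · exact not_crosses_of_isHullEdge (Or.inr (isHullEdge_of_mem_stdPath (mem_of_mem_erase he')))
  · exact not_crosses_of_isHullEdge (Or.inl (isHullEdge_of_mem_stdPath (mem_of_mem_erase he)))

lemma card_exchange {x : Fin n} {f : Sym2 (Fin n)} (hx : x.val + 1 < n) (hf : f ∉ stdPath n) :
    #(exchange x f) = n - 1 := by
  rw [exchange, card_insert_of_notMem (fun h => hf (mem_of_mem_erase h)),
    card_erase_of_mem (mem_stdPath.mpr ⟨x, hx, rfl⟩), stdPath, card_pathEdges]
  have := Nat.pos_of_ne_zero (NeZero.ne n)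
  omega

lemma adj_of_val_eq_exchange {u w : PVert n} {x : Fin n} {f : Sym2 (Fin n)} (hx : x.val + 1 < n)
    (hf : f ∉ stdPath n) (hu : u.1 = stdPath n) (hw : w.1 = exchange x f) :
    (pathGraph n).Adj u w := by
  have hxf : s(x, x + 1) ≠ f := ne_of_mem_of_not_mem (mem_stdPath.mpr ⟨x, hx, rfl⟩) hf
  have hcard : #(u.1 \ w.1 ∪ w.1 \ u.1) = 2 := by
    rw [hu, hw, exchange, sdiff_union_sdiff_insert_erase (mem_stdPath.mpr ⟨x, hx, rfl⟩) hf,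
      card_pair hxf]
  exact ⟨fun h => by simp [h] at hcard, hcard⟩

/-- A vertex of the new chord other than `0`, `n - 1`, `x`, `x + 1` would have degree three. -/
lemma endpoint_val_of_exchange_eq_pathEdges {x y : Fin n} {f : Sym2 (Fin n)}
    {q : Equiv.Perm (Fin n)} (hx : x.val + 1 < n) (hq : exchange x f = pathEdges q)
    (hf : f ∉ stdPath n) (hy : y ∈ f) :
    y.val = 0 ∨ y.val = n - 1 ∨ y.val = x.val ∨ y.val = x.val + 1 := by
  by_contra! h
  obtain ⟨h0, hn1, hx0, hx1⟩ := h
  have hy0 : (y - 1).val = y.val - 1 := Fin.val_sub_one_of_ne_zero (fun h => h0 (by simp [h]))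
  have hy1 : (y + 1).val = y.val + 1 := Fin.val_add_one_of_lt' (by omega)
  have hl : s(y - 1, y) ∈ (stdPath n).erase s(x, x + 1) :=
    (mk_mem_stdPath_erase hx).mpr (by omega)
  have hr : s(y, y + 1) ∈ (stdPath n).erase s(x, x + 1) :=
    (mk_mem_stdPath_erase hx).mpr (by omega)
  have hlr : s(y - 1, y) ≠ s(y, y + 1) := by simp [Fin.ext_iff]; omega
  have hsub : {s(y - 1, y), s(y, y + 1), f} ⊆ (exchange x f).filter (y ∈ ·) := by
    simp only [insert_subset_iff, singleton_subset_iff, mem_filter, exchange]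
    exact ⟨⟨mem_insert_of_mem hl, by simp⟩, ⟨mem_insert_of_mem hr, by simp⟩,
      mem_insert_self _ _, hy⟩
  have := card_le_card hsub
  rw [card_eq_three.mpr ⟨_, _, _, hlr, ne_of_mem_of_not_mem (mem_of_mem_erase hl) hf,
    ne_of_mem_of_not_mem (mem_of_mem_erase hr) hf, rfl⟩, hq] at this
  exact absurd (degIn_pathEdges_le_two q y) (by unfold degIn; omega)

/-- Such a chord would close a cycle on one side of the removed edge, disconnecting the path. -/
lemma exchange_ne_pathEdges_of_same_side {x c d : Fin n} (hx : x.val + 1 < n)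
    (h : c.val ≤ x.val ↔ d.val ≤ x.val) (q : Equiv.Perm (Fin n)) :
    exchange x s(c, d) ≠ pathEdges q := by
  intro hq
  have := iff_of_forall_mem_pathEdges q (·.val ≤ x.val) (fun a b hab => by
    rcases mem_insert.mp (hq ▸ hab) with hab | hab
    · rcases Sym2.eq_iff.mp hab with ⟨rfl, rfl⟩ | ⟨rfl, rfl⟩ <;> simp only [h]
    · have := (mk_mem_stdPath_erase hx).mp hab
      omega) 0 (-1)
  simp only [Fin.val_zero, val_neg_one] at this
  omega

def reflectChord (x : Fin n) (b₁ b₂ : Bool) : Sym2 (Fin n) :=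
  s(if b₁ then 0 else x, if b₂ then -1 else x + 1)

def reflectIndex (n : ℕ) [NeZero n] : Finset (Fin n × Bool × Bool) :=
  univ.filter (fun x : Fin n => x.val + 1 < n) ×ˢ {(true, true)} ∪
    univ.filter (fun x : Fin n => 0 < x.val ∧ x.val + 2 < n) ×ˢ {(true, false), (false, true)}

lemma mem_reflectIndex {x : Fin n} {b₁ b₂ : Bool} :
    (x, b₁, b₂) ∈ reflectIndex n ↔
      x.val + 1 < n ∧ (b₁ ∧ b₂ ∨ 0 < x.val ∧ x.val + 2 < n ∧ b₁ ≠ b₂) := by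
  cases b₁ <;> cases b₂ <;> simp [reflectIndex] <;> omega

omit [NeZero n] in
lemma card_filter_univ_val (p : ℕ → Prop) [DecidablePred p] :
    #(univ.filter fun x : Fin n => p x.val) = #((Iio n).filter p) := by
  simp only [← card_map Fin.valEmbedding, map_filter', Fin.map_valEmbedding_univ]
  congr 1
  ext k
  simp only [mem_filter, mem_Iio, Fin.valEmbedding_apply]
  constructor
  · rintro ⟨hk, a, ha, rfl⟩
    exact ⟨hk, ha⟩
  · rintro ⟨hk, h⟩
    exact ⟨hk, ⟨k, hk⟩, h, rfl⟩

lemma card_reflectIndex (hn : 3 ≤ n) : #(reflectIndex n) = 3 * n - 7 := by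
  have h₁ : (Iio n).filter (· + 1 < n) = Iio (n - 1) := by ext; simp; omega
  have h₂ : (Iio n).filter (fun k => 0 < k ∧ k + 2 < n) = Ioo 0 (n - 2) := by ext; simp; omega
  rw [reflectIndex, card_union_of_disjoint, card_product, card_product,
    card_filter_univ_val (· + 1 < n), card_filter_univ_val (fun k => 0 < k ∧ k + 2 < n),
    h₁, h₂, Nat.card_Iio, Nat.card_Ioo, card_singleton, card_pair (by decide)]
  · omega
  · simp [disjoint_left]

lemma reflectChord_not_mem_stdPath (hn : 3 ≤ n) {x : Fin n} {b₁ b₂ : Bool}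
    (hz : (x, b₁, b₂) ∈ reflectIndex n) : reflectChord x b₁ b₂ ∉ stdPath n := by
  rw [mem_reflectIndex] at hz
  cases b₁ <;> cases b₂ <;>
    simp_all [reflectChord, mk_mem_stdPath, val_neg_one, Fin.val_add_one_of_lt'] <;> omega

lemma reflectChord_inj {x : Fin n} {b₁ b₂ b₁' b₂' : Bool}
    (hz : (x, b₁, b₂) ∈ reflectIndex n) (hz' : (x, b₁', b₂') ∈ reflectIndex n)
    (h : reflectChord x b₁ b₂ = reflectChord x b₁' b₂') :
    b₁ = b₁' ∧ b₂ = b₂' := by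
  rw [mem_reflectIndex] at hz hz'
  simp only [reflectChord, Sym2.eq_iff, Fin.ext_iff, apply_ite Fin.val, Fin.val_zero, val_neg_one,
    Fin.val_add_one_of_lt' hz.1] at h
  cases b₁ <;> cases b₂ <;> cases b₁' <;> cases b₂' <;>
    simp only [Bool.false_eq_true, Bool.true_eq_false, ↓reduceIte, ne_eq, not_true_eq_false,
      not_false_eq_true, and_true, and_false, true_and, or_false, false_or] at h hz hz' ⊢ <;>
    omega

lemma pathEdges_reflectPerm (hn : 3 ≤ n) {x : Fin n} {b₁ b₂ : Bool}
    (hz : (x, b₁, b₂) ∈ reflectIndex n) :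
    pathEdges (reflectPerm x b₁ b₂) = exchange x (reflectChord x b₁ b₂) := by
  have hx := (mem_reflectIndex.mp hz).1
  refine eq_of_subset_of_card_le (fun e he => ?_) (by
    rw [card_exchange hx (reflectChord_not_mem_stdPath hn hz), card_pathEdges])
  obtain ⟨i, j, rfl, hij⟩ := mem_pathEdges.mp he
  have := j.isLt
  simp only [reflectPerm, Function.Involutive.coe_toPerm]
  by_cases hi : i = x
  · subst hi
    refine mem_insert.mpr (Or.inl ?_)
    simp only [reflectChord, Sym2.eq_iff, Fin.ext_iff, val_reflectSegments, apply_ite Fin.val,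
      Fin.val_zero, val_neg_one, Fin.val_add_one_of_lt' hx]
    cases b₁ <;> cases b₂ <;> simp only [Bool.false_eq_true, ↓reduceIte] <;> split_ifs <;>
      omega
  · apply mem_insert_of_mem
    rw [mk_mem_stdPath_erase hx, val_reflectSegments, val_reflectSegments]
    rw [Fin.ext_iff] at hi
    cases b₁ <;> cases b₂ <;> simp only [Bool.false_eq_true, ↓reduceIte] <;> split_ifs <;>
      omega

lemma isNCPath_exchange_reflectChord (hn : 3 ≤ n) {x : Fin n} {b₁ b₂ : Bool}
    (hz : (x, b₁, b₂) ∈ reflectIndex n) : IsNCPath (exchange x (reflectChord x b₁ b₂)) :=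
  ⟨⟨_, (pathEdges_reflectPerm hn hz).symm⟩,
    fun _ he _ he' => not_crosses_of_mem_exchange he he'⟩

lemma exists_reflectChord_of_exchange_eq_pathEdges {x : Fin n} {f : Sym2 (Fin n)}
    {q : Equiv.Perm (Fin n)} (hx : x.val + 1 < n) (hq : exchange x f = pathEdges q)
    (hf : f ∉ stdPath n) :
    ∃ b₁ b₂, (x, b₁, b₂) ∈ reflectIndex n ∧ f = reflectChord x b₁ b₂ := by
  induction f using Sym2.ind with | h c d => ?_
  have hcd : c.val ≠ d.val :=
    Fin.val_ne_of_ne (ne_of_mem_pathEdges (hq ▸ mem_insert_self _ _ : s(c, d) ∈ pathEdges q))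
  have hc := endpoint_val_of_exchange_eq_pathEdges hx hq hf (Sym2.mem_mk_left c d)
  have hd := endpoint_val_of_exchange_eq_pathEdges hx hq hf (Sym2.mem_mk_right c d)
  have hside : ¬ (c.val ≤ x.val ↔ d.val ≤ x.val) := fun h =>
    exchange_ne_pathEdges_of_same_side hx h q hq
  rw [mk_mem_stdPath] at hf
  have key : s(c, d) = s(0, -1) ∨
      0 < x.val ∧ x.val + 2 < n ∧ (s(c, d) = s(0, x + 1) ∨ s(c, d) = s(x, -1)) := by
    simp only [Sym2.eq_iff, Fin.ext_iff, Fin.val_zero, val_neg_one, Fin.val_add_one_of_lt' hx]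
    omega
  rcases key with h | ⟨h0, h1, h | h⟩
  · exact ⟨true, true, mem_reflectIndex.mpr ⟨hx, Or.inl ⟨rfl, rfl⟩⟩, h⟩
  · exact ⟨true, false, mem_reflectIndex.mpr ⟨hx, Or.inr ⟨h0, h1, by decide⟩⟩, h⟩
  · exact ⟨false, true, mem_reflectIndex.mpr ⟨hx, Or.inr ⟨h0, h1, by decide⟩⟩, h⟩

lemma exists_reflectIndex_of_adj {u w : PVert n} (hu : u.1 = stdPath n)
    (h : (pathGraph n).Adj u w) :
    ∃ z ∈ reflectIndex n, w.1 = exchange z.1 (reflectChord z.1 z.2.1 z.2.2) := by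
  obtain ⟨e, he, f, hf, hw⟩ :=
    exists_eq_insert_erase (by rw [← hu, PVert.card_val, PVert.card_val])
      (hu ▸ h.2 : #(stdPath n \ w.1 ∪ w.1 \ stdPath n) = 2)
  obtain ⟨x, hx, rfl⟩ := mem_stdPath.mp he
  obtain ⟨⟨q, hq⟩, -⟩ := w.2
  obtain ⟨b₁, b₂, hz, rfl⟩ := exists_reflectChord_of_exchange_eq_pathEdges hx
    (show exchange x f = pathEdges q from hw.symm.trans hq) hf
  exact ⟨(x, b₁, b₂), hz, hw⟩

lemma degree_eq_of_eq_stdPath (hn : 3 ≤ n) {u : PVert n} (hu : u.1 = stdPath n) :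
    (pathGraph n).degree u = 3 * n - 7 := by
  rw [← SimpleGraph.card_neighborFinset_eq_degree, ← card_reflectIndex hn]
  symm
  refine card_bij (fun z hz => ⟨_, isNCPath_exchange_reflectChord hn hz⟩)
    (fun z hz => ?_) (fun z hz z' hz' h => ?_) (fun w hw => ?_)
  · exact (SimpleGraph.mem_neighborFinset _ _ _).mpr (adj_of_val_eq_exchange
      (mem_reflectIndex.mp hz).1 (reflectChord_not_mem_stdPath hn hz) hu rfl)
  · obtain ⟨x, b₁, b₂⟩ := z
    obtain ⟨x', b₁', b₂'⟩ := z'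
    obtain ⟨hxx, hch⟩ := eq_and_eq_of_insert_erase_eq
      (mem_stdPath.mpr ⟨x, (mem_reflectIndex.mp hz).1, rfl⟩)
      (reflectChord_not_mem_stdPath hn hz) (congrArg Subtype.val h)
    obtain rfl := hullEdge_injective hn hxx
    obtain ⟨rfl, rfl⟩ := reflectChord_inj hz hz' hch
    rfl
  · obtain ⟨z, hz, hw⟩ :=
      exists_reflectIndex_of_adj hu ((SimpleGraph.mem_neighborFinset _ _ _).mp hw)
    exact ⟨z, hz, Subtype.ext hw.symm⟩

end Neighbors

/-- In `G(P)` with `n ≥ 5` points in convex position, every boundary path has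
degree exactly `3n - 7`. -/
theorem boundary_degree (n : ℕ) (hn : 5 ≤ n) (v : PVert n) (hv : IsBoundary v) :
    (pathGraph n).degree v = 3 * n - 7 := by
  have : NeZero n := ⟨by omega⟩
  obtain ⟨a, ha⟩ := exists_hullEdge_not_mem (by omega) v
  have hrot : rotateEdge (-(a + 1)) s(a, a + 1) = s(-1, 0) := by
    rw [rotateEdge_mk]
    congr 1 <;> abel
  rw [← (rotateIso (-(a + 1))).degree_eq v]
  refine degree_eq_of_eq_stdPath (by omega) (eq_stdPath_of_isBoundary (hv.rotate _) ?_)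
  rwa [rotateIso_val, ← hrot, mem_map']

end PG
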